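/- Let {x_k}_{k∈ℕ₀} be strictly positive reals. If x_k^{1/n} defines a completely monotone sequence (in k) for each fixed n ∈ ℕ, then ∇ʲ(ln x_k) ≥ 0 for all k ∈ ℕ₀ and j ∈ ℕ, i.e. {x_k} is completely log-monotone. -/

import Mathlib

/-!
Since `n (a^{1/n} - 1) → log a` and `∇ʲ` kills constants for `j ≥ 1`, the quantities
`n ∇ʲ x_k^{1/n} = ∇ʲ (n (x_k^{1/n} - 1))` are nonnegative and converge to `∇ʲ log x_k`.
-/

open Filter Finset Real Topology

/-- The paper's `∇ʲ y_k`. -/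
def altDiff {R : Type*} [Ring R] (j : ℕ) (y : ℕ → R) (k : ℕ) : R :=
  ∑ i ∈ range (j + 1), (-1 : R) ^ i * (j.choose i : R) * y (k + i)

section altDiff

variable {R : Type*}

theorem altDiff_sub [Ring R] (j : ℕ) (y z : ℕ → R) (k : ℕ) :
    altDiff j (fun m => y m - z m) k = altDiff j y k - altDiff j z k := by
  simp only [altDiff, mul_sub, sum_sub_distrib]

theorem altDiff_const_mul [CommRing R] (j : ℕ) (c : R) (y : ℕ → R) (k : ℕ) :
    altDiff j (fun m => c * y m) k = c * altDiff j y k := by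
  simp only [altDiff, mul_sum]
  exact sum_congr rfl fun _ _ => by ring

theorem altDiff_const [Ring R] {j : ℕ} (hj : j ≠ 0) (c : R) (k : ℕ) :
    altDiff j (fun _ => c) k = 0 := by
  have h : (∑ i ∈ range (j + 1), (-1 : R) ^ i * (j.choose i : R)) = 0 := by
    exact_mod_cast congrArg (Int.cast : ℤ → R) (Int.alternating_sum_range_choose_of_ne hj)
  simp only [altDiff, ← sum_mul, h, zero_mul]

theorem tendsto_altDiff [Ring R] [TopologicalSpace R] [IsTopologicalRing R] {ι : Type*}
    {l : Filter ι} {y : ι → ℕ → R} {z : ℕ → R} (h : ∀ m, Tendsto (fun n => y n m) l (𝓝 (z m)))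
    (j k : ℕ) : Tendsto (fun n => altDiff j (y n) k) l (𝓝 (altDiff j z k)) :=
  tendsto_finsetSum _ fun i _ => (h (k + i)).const_mul _

end altDiff

/-- `n (a^{1/n} - 1)` is a difference quotient of `t ↦ a^t` at `0`, whose derivative is `log a`. -/
theorem tendsto_nat_mul_rpow_inv_sub_one {a : ℝ} (ha : 0 < a) :
    Tendsto (fun n : ℕ => (n : ℝ) * (a ^ (n : ℝ)⁻¹ - 1)) atTop (𝓝 (log a)) := by
  have hslope := (hasStrictDerivAt_const_rpow ha 0).hasDerivAt.tendsto_slope_zero_right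
  have hinv : Tendsto (fun n : ℕ => (n : ℝ)⁻¹) atTop (𝓝[>] 0) :=
    tendsto_inv_atTop_nhdsGT_zero.comp tendsto_natCast_atTop_atTop
  simpa only [Function.comp_def, zero_add, rpow_zero, one_mul, inv_inv, smul_eq_mul]
    using hslope.comp hinv

/-- If `x_k^{1/n}` defines a completely monotone sequence for each fixed `n ∈ ℕ`,
then the strictly positive sequence `{x_k}` is completely log-monotone. -/
theorem roots_completely_monotone_imp_completely_log_monotone
    (x : ℕ → ℝ) (hpos : ∀ k, 0 < x k)
    (hroot : ∀ n : ℕ, 1 ≤ n → ∀ j k : ℕ,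
      0 ≤ ∑ i ∈ Finset.range (j + 1),
        (-1 : ℝ) ^ i * (Nat.choose j i : ℝ) * (x (k + i)) ^ ((n : ℝ)⁻¹)) :
    ∀ k j : ℕ, 1 ≤ j →
      0 ≤ ∑ i ∈ Finset.range (j + 1),
        (-1 : ℝ) ^ i * (Nat.choose j i : ℝ) * Real.log (x (k + i)) := by
  intro k j hj
  show 0 ≤ altDiff j (fun m => log (x m)) k
  have hlim : Tendsto (fun n : ℕ => altDiff j (fun m => (n : ℝ) * (x m ^ (n : ℝ)⁻¹ - 1)) k)
      atTop (𝓝 (altDiff j (fun m => log (x m)) k)) :=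
    tendsto_altDiff (fun m => tendsto_nat_mul_rpow_inv_sub_one (hpos m)) j k
  refine ge_of_tendsto hlim ?_
  filter_upwards [eventually_ge_atTop 1] with n hn
  rw [altDiff_const_mul, altDiff_sub, altDiff_const (by omega), sub_zero]
  exact mul_nonneg n.cast_nonneg (hroot n hn j k)
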